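/- (Unified deterministic inequality for CSMD under a uniformly convex mirror map, heavy-tail setting.) Let p ∈ (1,2). Suppose Assumptions 2 and 3 hold with μ_f = μ_h = 0 and that ψ is (1, p/(p−1))-uniformly convex, i.e. D_ψ(x,y) ≥ ((p−1)/p)‖x−y‖^{p/(p−1)} for all x,y ∈ 𝒳. Define v_t := η_T/(Σ_{s=max(t,1)}^T η_s) for t ∈ {0}∪[T], and for fixed x ∈ 𝒳 define z^t := (v_0/v_t)·x + Σ_{s=1}^t ((v_s − v_{s−1})/v_t)·x^s. Then for every realization (with g^t ∈ ∂f(x^t) the conditional mean and ξ^t = ĝ^t − g^t): η_T v_T (F(x^{T+1}) − F(x)) ≤ v_0 D_ψ(x, x^1) + Σ_{t=1}^T η_t v_{t−1} ⟨ξ^t, z^{t−1} − x^t⟩ + Σ_{t=1}^T [ η_t^{p/(2−p)} v_t (2−p) 2^{(3p−4)/(2−p)} L^{p/(2−p)} + η_t^p v_t 4^{p−1}(M^p + ‖ξ^t‖_*^p) ] / p. -/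

import Mathlib

open MeasureTheory Real
open scoped RealInnerProductSpace BigOperators

/-- The dual norm of a general norm `nrm` on `ℝ^d`. -/
noncomputable def dualNorm {d : ℕ} (nrm : EuclideanSpace ℝ (Fin d) → ℝ) (g : EuclideanSpace ℝ (Fin d)) : ℝ :=
  sSup {r : ℝ | ∃ x, nrm x ≤ 1 ∧ r = ⟪g, x⟫}

/-- The subdifferential of `φ` at `y`, relative to the domain `X`. -/
def subgrad {d : ℕ} (X : Set (EuclideanSpace ℝ (Fin d))) (φ : EuclideanSpace ℝ (Fin d) → ℝ) (y : EuclideanSpace ℝ (Fin d)) : Set (EuclideanSpace ℝ (Fin d)) :=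
  {g | ∀ x ∈ X, φ y + ⟪g, x - y⟫ ≤ φ x}

/-- The Bregman divergence associated with `ψ`, whose gradient is `gψ`. -/
noncomputable def breg {d : ℕ} (ψ : EuclideanSpace ℝ (Fin d) → ℝ) (gψ : EuclideanSpace ℝ (Fin d) → EuclideanSpace ℝ (Fin d)) (x y : EuclideanSpace ℝ (Fin d)) : ℝ :=
  ψ x - ψ y - ⟪gψ y, x - y⟫

/-- The σ-algebra `σ(ĝ^1, …, ĝ^t)` generated by the first `t` stochastic gradients. -/
noncomputable def natFilt {Ω : Type*} {d : ℕ}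
    (ghat : ℕ → Ω → EuclideanSpace ℝ (Fin d)) (t : ℕ) : MeasurableSpace Ω :=
  ⨆ s ∈ Finset.Icc 1 t, MeasurableSpace.comap (ghat s) inferInstance

/-!
Each step of CSMD satisfies, for every comparator `u ∈ 𝒳`, the one-step inequality
`η_t (F(x^{t+1}) - F(u)) ≤ η_t ⟨ξ^t, u - x^t⟩ + D(u, x^t) - D(u, x^{t+1}) + C_t`:
the three-point identity of the Bregman divergence handles the proximal step, and the
smoothness and noise terms, of order `‖x^{t+1} - x^t‖` and `‖x^{t+1} - x^t‖²`, are absorbed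
by the gain `(p-1)/p ‖x^{t+1} - x^t‖^{p/(p-1)}` of uniform convexity through Young's inequality,
which produces `C_t`.

Comparing with the anytime average `z^{t-1}` (weight `v_{t-1}`) and with `x^t`
(weight `v_t - v_{t-1}`), convexity of `F` and of `D(·, w)` turns these inequalities into a
telescoping sum of `v_t D(z^t, x^{t+1})`. The weights `v_t = η_T / ∑_{s ≥ t} η_s` satisfy
`(v_{t+1} - v_t) ∑_{s > t} η_s = v_t η_t`, which is exactly what makes the function values
telescope (by Abel summation) to `η_T v_T (F(x^{T+1}) - F(x))`.
-/

section ConvexCombination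

variable {E : Type*} [AddCommGroup E] [Module ℝ E] {a b c : ℝ} {x y z : E}

theorem eq_div_smul_add_div_smul_of_smul_eq (hc : c ≠ 0) (hz : c • z = a • x + b • y) :
    z = (a / c) • x + (b / c) • y := by
  rw [div_eq_inv_mul, div_eq_inv_mul, mul_smul, mul_smul, ← smul_add, ← hz, inv_smul_smul₀ hc]

theorem Convex.mem_of_smul_eq {s : Set E} (hs : Convex ℝ s) (hx : x ∈ s) (hy : y ∈ s)
    (ha : 0 ≤ a) (hb : 0 ≤ b) (hc : 0 < c) (habc : a + b = c) (hz : c • z = a • x + b • y) :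
    z ∈ s := by
  rw [eq_div_smul_add_div_smul_of_smul_eq hc.ne' hz]
  exact hs hx hy (by positivity) (by positivity) (by rw [← add_div, habc, div_self hc.ne'])

theorem ConvexOn.mul_le_of_smul_eq {s : Set E} {f : E → ℝ} (hf : ConvexOn ℝ s f) (hx : x ∈ s)
    (hy : y ∈ s) (ha : 0 ≤ a) (hb : 0 ≤ b) (hc : 0 < c) (habc : a + b = c)
    (hz : c • z = a • x + b • y) : c * f z ≤ a * f x + b * f y := by
  have key := hf.2 hx hy (div_nonneg ha hc.le) (div_nonneg hb hc.le)
    (by rw [← add_div, habc, div_self hc.ne'])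
  rw [← eq_div_smul_add_div_smul_of_smul_eq hc.ne' hz, smul_eq_mul, smul_eq_mul] at key
  calc c * f z ≤ c * (a / c * f x + b / c * f y) := by gcongr
    _ = a * f x + b * f y := by field_simp

end ConvexCombination

theorem Seminorm.exists_pos_mul_norm_le {E : Type*} [NormedAddCommGroup E] [NormedSpace ℝ E]
    [FiniteDimensional ℝ E] (p : Seminorm ℝ E) (hp : ∀ x, p x = 0 → x = 0) :
    ∃ c > 0, ∀ x, c * ‖x‖ ≤ p x := by
  rcases subsingleton_or_nontrivial E with hE | hE
  · exact ⟨1, one_pos, fun x => by simp [Subsingleton.elim x 0]⟩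
  obtain ⟨m, hm, hmin⟩ := (isCompact_sphere (0 : E) 1).exists_isMinOn
    (NormedSpace.sphere_nonempty.mpr zero_le_one)
    p.convexOn.locallyLipschitz.continuous.continuousOn
  have hm0 : m ≠ 0 := by rintro rfl; simp at hm
  refine ⟨p m, (apply_nonneg p m).lt_of_ne' (mt (hp m) hm0), fun x => ?_⟩
  rcases eq_or_ne x 0 with rfl | hx
  · simp
  have hnx : 0 < ‖x‖ := norm_pos_iff.mpr hx
  have hmx : p m ≤ ‖x‖⁻¹ * p x := by
    simpa [map_smul_eq_mul, hnx.le] using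
      hmin (show ‖x‖⁻¹ • x ∈ Metric.sphere (0 : E) 1 by simp [norm_smul, hnx.ne'])
  calc p m * ‖x‖ ≤ ‖x‖⁻¹ * p x * ‖x‖ := by gcongr
    _ = p x := by field_simp

section DualNorm

variable {d : ℕ} (ν : Seminorm ℝ (EuclideanSpace ℝ (Fin d)))

theorem bddAbove_dualNorm_set (hν : ∀ x, ν x = 0 → x = 0) (g : EuclideanSpace ℝ (Fin d)) :
    BddAbove {r : ℝ | ∃ x, ν x ≤ 1 ∧ r = ⟪g, x⟫} := by
  obtain ⟨c, hc, hcν⟩ := ν.exists_pos_mul_norm_le hν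
  refine ⟨‖g‖ / c, ?_⟩
  rintro _ ⟨y, hy, rfl⟩
  rw [le_div_iff₀ hc]
  calc ⟪g, y⟫ * c ≤ ‖g‖ * ‖y‖ * c := by gcongr; exact real_inner_le_norm g y
    _ = ‖g‖ * (c * ‖y‖) := by ring
    _ ≤ ‖g‖ := mul_le_of_le_one_right (norm_nonneg g) ((hcν y).trans hy)

theorem dualNorm_nonneg (hν : ∀ x, ν x = 0 → x = 0) (g : EuclideanSpace ℝ (Fin d)) :
    0 ≤ dualNorm ν g :=
  le_csSup (bddAbove_dualNorm_set ν hν g) ⟨0, by simp, by simp⟩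

theorem inner_le_dualNorm_mul (hν : ∀ x, ν x = 0 → x = 0) (g u : EuclideanSpace ℝ (Fin d)) :
    ⟪g, u⟫ ≤ dualNorm ν g * ν u := by
  rcases (apply_nonneg ν u).lt_or_eq with hu | hu
  · have hmem : ⟪g, (ν u)⁻¹ • u⟫ ∈ {r : ℝ | ∃ x, ν x ≤ 1 ∧ r = ⟪g, x⟫} :=
      ⟨(ν u)⁻¹ • u, by rw [map_smul_eq_mul, Real.norm_eq_abs, abs_inv, abs_of_pos hu,
        inv_mul_cancel₀ hu.ne'], rfl⟩
    have := le_csSup (bddAbove_dualNorm_set ν hν g) hmem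
    rw [real_inner_smul_right, inv_mul_le_iff₀ hu] at this
    rwa [dualNorm, mul_comm]
  · simp [hν u hu.symm]

end DualNorm

section Young

theorem young_inequality_weighted {p q a b c : ℝ} (hpq : p.HolderConjugate q)
    (ha : 0 ≤ a) (hb : 0 ≤ b) (hc : 0 < c) :
    a * b ≤ c ^ (p - 1) * a ^ p / p + b ^ q / (c * q) := by
  have hcq : 0 ≤ c ^ q⁻¹ := by positivity
  have key := Real.young_inequality_of_nonneg (mul_nonneg ha hcq)
    (mul_nonneg hb (inv_nonneg.mpr hcq)) hpq
  rw [mul_mul_mul_comm, mul_inv_cancel₀ (by positivity), mul_one, Real.mul_rpow ha hcq,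
    Real.mul_rpow hb (by positivity), Real.inv_rpow hcq, ← Real.rpow_mul hc.le,
    ← Real.rpow_mul hc.le, inv_mul_cancel₀ hpq.symm.pos.ne', Real.rpow_one,
    show q⁻¹ * p = p - 1 by rw [← hpq.div_conj_eq_sub_one]; ring] at key
  calc a * b ≤ a ^ p * c ^ (p - 1) / p + b ^ q * c⁻¹ / q := key
    _ = _ := by field_simp

theorem young_linear {p b r : ℝ} (hp : 1 < p) (hb : 0 ≤ b) (hr : 0 ≤ r) :
    b * r ≤ 2 ^ (p - 1) * b ^ p / p + (p - 1) / (2 * p) * r ^ (p / (p - 1)) := by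
  convert young_inequality_weighted (Real.HolderConjugate.conjExponent hp) hb hr two_pos using 2
  have : p - 1 ≠ 0 := by linarith
  rw [Real.conjExponent]
  field_simp

theorem young_quadratic {p A r : ℝ} (hp1 : 1 < p) (hp2 : p < 2) (hA : 0 ≤ A) (hr : 0 ≤ r) :
    A / 2 * r ^ 2 ≤ (2 - p) / p * 2 ^ ((3 * p - 4) / (2 - p)) * A ^ (p / (2 - p))
      + (p - 1) / (2 * p) * r ^ (p / (p - 1)) := by
  have h2p : 2 - p ≠ 0 := by linarith
  have hpq : (p / (2 - p)).HolderConjugate (p / (2 * (p - 1))) := by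
    rw [Real.holderConjugate_iff]
    refine ⟨by rw [one_lt_div (by linarith)]; linarith, ?_⟩
    field_simp
    ring
  have key := young_inequality_weighted hpq (by positivity : 0 ≤ A / 2) (sq_nonneg r)
    (by norm_num : (0 : ℝ) < 4)
  have h4 : (4 : ℝ) ^ (p / (2 - p) - 1) * (A / 2) ^ (p / (2 - p))
      = 2 ^ ((3 * p - 4) / (2 - p)) * A ^ (p / (2 - p)) := by
    calc (4 : ℝ) ^ (p / (2 - p) - 1) * (A / 2) ^ (p / (2 - p))
        = 2 ^ (2 * (p / (2 - p) - 1)) / 2 ^ (p / (2 - p)) * A ^ (p / (2 - p)) := by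
          rw [Real.div_rpow hA zero_le_two, show (4 : ℝ) = 2 ^ (2 : ℝ) by norm_num,
            ← Real.rpow_mul zero_le_two]
          ring
      _ = 2 ^ ((3 * p - 4) / (2 - p)) * A ^ (p / (2 - p)) := by
          rw [← Real.rpow_sub two_pos]
          congr 2
          field_simp
          ring
  have hsq : (r ^ 2) ^ (p / (2 * (p - 1))) = r ^ (p / (p - 1)) := by
    rw [← Real.rpow_natCast, ← Real.rpow_mul hr]
    congr 1
    push_cast
    field_simp
  calc A / 2 * r ^ 2 ≤ _ := key
    _ = _ := by
      rw [h4, hsq]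
      field_simp
      ring

theorem add_rpow_le_two_rpow_mul {p M N : ℝ} (hp : 1 ≤ p) (hM : 0 ≤ M) (hN : 0 ≤ N) :
    (M + N) ^ p ≤ 2 ^ (p - 1) * (M ^ p + N ^ p) := by
  lift M to NNReal using hM
  lift N to NNReal using hN
  exact_mod_cast NNReal.rpow_add_le_mul_rpow_add_rpow M N hp

theorem young_step_cost_le {p e L M N r : ℝ} (hp1 : 1 < p) (hp2 : p < 2) (he : 0 ≤ e)
    (hL : 0 ≤ L) (hM : 0 ≤ M) (hN : 0 ≤ N) (hr : 0 ≤ r) :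
    e * (L / 2 * r ^ 2 + (M + N) * r) - (p - 1) / p * r ^ (p / (p - 1)) ≤
      (e ^ (p / (2 - p)) * (2 - p) * 2 ^ ((3 * p - 4) / (2 - p)) * L ^ (p / (2 - p))
        + e ^ p * 4 ^ (p - 1) * (M ^ p + N ^ p)) / p := by
  have hquad := young_quadratic hp1 hp2 (mul_nonneg he hL) hr
  have hlin := young_linear hp1 (mul_nonneg he (add_nonneg hM hN)) hr
  rw [Real.mul_rpow he hL] at hquad
  rw [Real.mul_rpow he (add_nonneg hM hN)] at hlin
  have hMN : 2 ^ (p - 1) * (e ^ p * (M + N) ^ p) / p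
      ≤ e ^ p * 4 ^ (p - 1) * (M ^ p + N ^ p) / p := by
    rw [show (4 : ℝ) = 2 * 2 by norm_num, Real.mul_rpow zero_le_two zero_le_two]
    have := add_rpow_le_two_rpow_mul hp1.le hM hN
    calc 2 ^ (p - 1) * (e ^ p * (M + N) ^ p) / p
        ≤ 2 ^ (p - 1) * (e ^ p * (2 ^ (p - 1) * (M ^ p + N ^ p))) / p := by gcongr
      _ = _ := by ring
  have hhalf : (p - 1) / (2 * p) * r ^ (p / (p - 1)) + (p - 1) / (2 * p) * r ^ (p / (p - 1))
      = (p - 1) / p * r ^ (p / (p - 1)) := by field_simp; ring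
  have hsplit : (e ^ (p / (2 - p)) * (2 - p) * 2 ^ ((3 * p - 4) / (2 - p)) * L ^ (p / (2 - p))
        + e ^ p * 4 ^ (p - 1) * (M ^ p + N ^ p)) / p
      = (2 - p) / p * 2 ^ ((3 * p - 4) / (2 - p)) * (e ^ (p / (2 - p)) * L ^ (p / (2 - p)))
        + e ^ p * 4 ^ (p - 1) * (M ^ p + N ^ p) / p := by ring
  have hexpand : e * (L / 2 * r ^ 2 + (M + N) * r) = e * L / 2 * r ^ 2 + e * (M + N) * r := by
    ring
  linarith

end Young

theorem IsMinOn.le_add_fderiv_of_convexOn {E : Type*} [NormedAddCommGroup E] [NormedSpace ℝ E]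
    {s : Set E} {h G : E → ℝ} {G' : E →L[ℝ] ℝ} {a u : E} (hh : ConvexOn ℝ s h)
    (hG : HasFDerivAt G G' a) (hmin : IsMinOn (fun w => h w + G w) s a) (ha : a ∈ s)
    (hu : u ∈ s) : h a ≤ h u + G' (u - a) := by
  -- restrict to the segment `[a, u]`, replacing `h` by the chord that dominates it
  set k : ℝ → ℝ := fun l => l * (h u - h a) + G (a + l • (u - a))
  have hline : HasDerivAt (fun l : ℝ => a + l • (u - a)) (u - a) 0 := by
    simpa using ((hasDerivAt_id (0 : ℝ)).smul_const (u - a)).const_add a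
  have hk : HasDerivAt k (h u - h a + G' (u - a)) 0 :=
    (hasDerivAt_mul_const (h u - h a)).add (hG.comp_hasDerivAt_of_eq (0 : ℝ) hline (by simp))
  have hkmin : IsMinOn k (Set.Icc 0 1) 0 := by
    intro l ⟨hl0, hl1⟩
    have hw : a + l • (u - a) = (1 - l) • a + l • u := by
      rw [smul_sub, sub_smul, one_smul]; abel
    have hl1' : 0 ≤ 1 - l := sub_nonneg.2 hl1
    have hconv := hh.2 ha hu hl1' hl0 (sub_add_cancel 1 l)
    have hmw := hmin (hh.1 ha hu hl1' hl0 (sub_add_cancel 1 l))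
    simp only [Set.mem_ofPred_eq, smul_eq_mul] at hconv hmw
    simp only [Set.mem_ofPred_eq, k, zero_mul, zero_smul, add_zero, zero_add, hw]
    linarith
  have hseg : segment ℝ (0 : ℝ) (0 + 1) ⊆ Set.Icc 0 1 := by
    rw [segment_eq_Icc (by norm_num)]; simp
  have := hkmin.localize.hasFDerivWithinAt_nonneg hk.hasFDerivAt.hasFDerivWithinAt
    (mem_posTangentConeAt_of_segment_subset hseg)
  rw [ContinuousLinearMap.toSpanSingleton_apply, one_smul] at this
  linarith

theorem hasFDerivAt_inner_sub_const {F : Type*} [NormedAddCommGroup F] [InnerProductSpace ℝ F]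
    (g y a : F) : HasFDerivAt (fun w => ⟪g, w - y⟫) (innerSL ℝ g) a := by
  simpa [inner_sub_right] using (innerSL ℝ g).hasFDerivAt.sub_const ⟪g, y⟫

section Bregman

variable {d : ℕ} {ψ : EuclideanSpace ℝ (Fin d) → ℝ}
  {gψ : EuclideanSpace ℝ (Fin d) → EuclideanSpace ℝ (Fin d)} {X : Set (EuclideanSpace ℝ (Fin d))}

theorem breg_self (a : EuclideanSpace ℝ (Fin d)) : breg ψ gψ a a = 0 := by
  simp [breg]

theorem breg_three_point (u y w : EuclideanSpace ℝ (Fin d)) :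
    ⟪gψ w - gψ y, u - w⟫ = breg ψ gψ u y - breg ψ gψ u w - breg ψ gψ w y := by
  simp only [breg, inner_sub_left, inner_sub_right]
  ring

theorem convexOn_of_breg_nonneg (hX : Convex ℝ X) (h0 : ∀ a ∈ X, ∀ b ∈ X, 0 ≤ breg ψ gψ a b) :
    ConvexOn ℝ X ψ := by
  refine ⟨hX, fun a ha b hb α β hα hβ hαβ => ?_⟩
  set c := α • a + β • b
  have hc := hX ha hb hα hβ hαβ
  have hlin : α * ⟪gψ c, a - c⟫ + β * ⟪gψ c, b - c⟫ = 0 := by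
    rw [← real_inner_smul_right, ← real_inner_smul_right, ← inner_add_right,
      show α • (a - c) + β • (b - c) = c - (α + β) • c by simp only [c, smul_sub, add_smul]; abel,
      hαβ, one_smul, sub_self, inner_zero_right]
  have ha' := mul_nonneg hα (h0 a ha c hc)
  have hb' := mul_nonneg hβ (h0 b hb c hc)
  simp only [breg, smul_eq_mul] at ha' hb' ⊢
  linear_combination ha' + hb' - hlin - ψ c * hαβ

theorem convexOn_breg_left (hX : Convex ℝ X) (h0 : ∀ a ∈ X, ∀ b ∈ X, 0 ≤ breg ψ gψ a b)
    (w : EuclideanSpace ℝ (Fin d)) : ConvexOn ℝ X (fun u => breg ψ gψ u w) := by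
  refine ⟨hX, fun a ha b hb α β hα hβ hαβ => ?_⟩
  have hψ := (convexOn_of_breg_nonneg hX h0).2 ha hb hα hβ hαβ
  have hlin : ⟪gψ w, α • a + β • b - w⟫ = α * ⟪gψ w, a - w⟫ + β * ⟪gψ w, b - w⟫ := by
    rw [← real_inner_smul_right, ← real_inner_smul_right, ← inner_add_right]
    congr 1
    linear_combination (norm := module) hαβ • w
  simp only [breg, smul_eq_mul] at hψ ⊢
  linear_combination hψ - hlin + ψ w * hαβ

theorem breg_prox_step_le {h : EuclideanSpace ℝ (Fin d) → ℝ} (hh : ConvexOn ℝ X h)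
    {g y xp u : EuclideanSpace ℝ (Fin d)} {e : ℝ} (hψ : HasGradientAt ψ (gψ xp) xp) (he : 0 < e)
    (hmin : IsMinOn (fun w => h w + ⟪g, w - y⟫ + breg ψ gψ w y / e) X xp) (hxp : xp ∈ X)
    (hu : u ∈ X) :
    e * (h xp - h u) ≤
      e * ⟪g, u - xp⟫ + breg ψ gψ u y - breg ψ gψ u xp - breg ψ gψ xp y := by
  have hbreg : HasFDerivAt (fun w => breg ψ gψ w y)
      (InnerProductSpace.toDual ℝ _ (gψ xp) - innerSL ℝ (gψ y)) xp :=
    (hψ.hasFDerivAt.sub_const (ψ y)).sub (hasFDerivAt_inner_sub_const (gψ y) y xp)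
  have hopt := IsMinOn.le_add_fderiv_of_convexOn hh
    ((hasFDerivAt_inner_sub_const g y xp).fun_add (hbreg.mul_const e⁻¹))
    (by simpa only [add_assoc, div_eq_mul_inv] using hmin) hxp hu
  have hthree := breg_three_point (ψ := ψ) (gψ := gψ) u y xp
  simp only [add_apply, smul_apply, sub_apply, innerSL_apply_apply,
    InnerProductSpace.toDual_apply_apply, smul_eq_mul] at hopt
  rw [inner_sub_left] at hthree
  rw [hthree] at hopt
  calc e * (h xp - h u) ≤ e * (⟪g, u - xp⟫
        + e⁻¹ * (breg ψ gψ u y - breg ψ gψ u xp - breg ψ gψ xp y)) := by gcongr; linarith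
    _ = _ := by field_simp; ring

theorem csmd_one_step_le {f h : EuclideanSpace ℝ (Fin d) → ℝ} {p L M N e r : ℝ}
    {y xp u gh gs : EuclideanSpace ℝ (Fin d)}
    (hp1 : 1 < p) (hp2 : p < 2) (hL : 0 ≤ L) (hM : 0 ≤ M) (hN : 0 ≤ N) (he : 0 < e) (hr : 0 ≤ r)
    (hh : ConvexOn ℝ X h) (hψ : HasGradientAt ψ (gψ xp) xp)
    (hmin : IsMinOn (fun w => h w + ⟪gh, w - y⟫ + breg ψ gψ w y / e) X xp) (hxp : xp ∈ X)
    (hu : u ∈ X) (hgs : gs ∈ subgrad X f y)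
    (hsmooth : f xp - f y - ⟪gs, xp - y⟫ ≤ L / 2 * r ^ 2 + M * r)
    (huc : (p - 1) / p * r ^ (p / (p - 1)) ≤ breg ψ gψ xp y)
    (hξ : ⟪gh - gs, y - xp⟫ ≤ N * r) :
    e * (f xp + h xp - (f u + h u)) ≤
      e * ⟪gh - gs, u - y⟫ + breg ψ gψ u y - breg ψ gψ u xp
        + (e ^ (p / (2 - p)) * (2 - p) * 2 ^ ((3 * p - 4) / (2 - p)) * L ^ (p / (2 - p))
          + e ^ p * 4 ^ (p - 1) * (M ^ p + N ^ p)) / p := by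
  have hprox := breg_prox_step_le hh hψ he hmin hxp hu
  have hf : e * (f xp - f u) ≤ e * (⟪gs, xp - y⟫ - ⟪gs, u - y⟫ + L / 2 * r ^ 2 + M * r) := by
    have hsub : f y + ⟪gs, u - y⟫ ≤ f u := hgs u hu
    gcongr
    linarith
  have hinner : ⟪gh, u - xp⟫ + ⟪gs, xp - y⟫ - ⟪gs, u - y⟫
      = ⟪gh - gs, u - y⟫ + ⟪gh - gs, y - xp⟫ := by
    simp only [inner_sub_left, inner_sub_right]; ring
  have hξ' := mul_le_mul_of_nonneg_left hξ he.le
  have hyoung := young_step_cost_le hp1 hp2 he.le hL hM hN hr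
  linear_combination hf + hprox + e * hinner + hξ' + huc + hyoung

end Bregman

section Averaging

open Finset

def IsAnytimeWeight (η v : ℕ → ℝ) (T : ℕ) : Prop :=
  ∀ t ≤ T, v t = η T / ∑ s ∈ Icc (max t 1) T, η s

def IsAnytimeAverage {E : Type*} [AddCommGroup E] [Module ℝ E] (v : ℕ → ℝ) (y : E)
    (x z : ℕ → E) (T : ℕ) : Prop :=
  ∀ t ≤ T, z t = (v 0 / v t) • y + ∑ s ∈ Icc 1 t, ((v s - v (s - 1)) / v t) • x s

variable {η v : ℕ → ℝ} {T : ℕ}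

theorem sum_Icc_pos_of_pos (hη : ∀ t ∈ Icc 1 T, 0 < η t) {t : ℕ} (ht1 : 1 ≤ t) (htT : t ≤ T) :
    0 < ∑ s ∈ Icc t T, η s :=
  sum_pos (fun s hs => hη s (mem_Icc.2 ⟨ht1.trans (mem_Icc.1 hs).1, (mem_Icc.1 hs).2⟩))
    ⟨t, mem_Icc.2 ⟨le_rfl, htT⟩⟩

namespace IsAnytimeWeight

theorem mul_sum_Icc (hv : IsAnytimeWeight η v T) (hη : ∀ t ∈ Icc 1 T, 0 < η t) {t : ℕ}
    (ht1 : 1 ≤ t) (htT : t ≤ T) : v t * ∑ s ∈ Icc t T, η s = η T := by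
  rw [hv t htT, max_eq_left ht1, div_mul_cancel₀ _ (sum_Icc_pos_of_pos hη ht1 htT).ne']

theorem pos (hv : IsAnytimeWeight η v T) (hη : ∀ t ∈ Icc 1 T, 0 < η t) (hT : 1 ≤ T) {t : ℕ}
    (ht : t ≤ T) : 0 < v t := by
  rw [hv t ht]
  exact div_pos (hη T (mem_Icc.2 ⟨hT, le_rfl⟩))
    (sum_Icc_pos_of_pos hη (le_max_right t 1) (max_le ht hT))

theorem apply_zero (hv : IsAnytimeWeight η v T) (hT : 1 ≤ T) : v 0 = v 1 := by
  rw [hv 0 (Nat.zero_le T), hv 1 hT]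
  rfl

theorem apply_last (hv : IsAnytimeWeight η v T) (hη : ∀ t ∈ Icc 1 T, 0 < η t) (hT : 1 ≤ T) :
    v T = 1 := by
  have := hv.mul_sum_Icc hη hT le_rfl
  rwa [Icc_self, sum_singleton, mul_eq_right₀ (hη T (mem_Icc.2 ⟨hT, le_rfl⟩)).ne'] at this

theorem succ_sub_mul_sum_Icc (hv : IsAnytimeWeight η v T) (hη : ∀ t ∈ Icc 1 T, 0 < η t)
    {t : ℕ} (ht1 : 1 ≤ t) (htT : t + 1 ≤ T) :
    (v (t + 1) - v t) * ∑ s ∈ Icc (t + 1) T, η s = v t * η t := by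
  have hsucc := hv.mul_sum_Icc hη (by omega) htT
  have hcur := hv.mul_sum_Icc hη ht1 (by omega)
  rw [← add_sum_Ioc_eq_sum_Icc (by omega), ← Icc_add_one_left_eq_Ioc] at hcur
  linear_combination hsucc - hcur

theorem le_succ (hv : IsAnytimeWeight η v T) (hη : ∀ t ∈ Icc 1 T, 0 < η t) {t : ℕ}
    (htT : t + 1 ≤ T) : v t ≤ v (t + 1) := by
  rcases Nat.eq_zero_or_pos t with rfl | ht1
  · exact (hv.apply_zero htT).le
  have hS := sum_Icc_pos_of_pos hη (Nat.le_succ_of_le ht1) htT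
  have : 0 ≤ (v (t + 1) - v t) * ∑ s ∈ Icc (t + 1) T, η s := by
    rw [hv.succ_sub_mul_sum_Icc hη ht1 htT]
    exact mul_nonneg (hv.pos hη (by omega) (by omega)).le
      (hη t (mem_Icc.2 ⟨ht1, by omega⟩)).le
  linarith [nonneg_of_mul_nonneg_left this hS]

end IsAnytimeWeight

theorem weighted_last_iterate_le (hη : ∀ t ∈ Icc 1 T, 0 < η t) (hv : IsAnytimeWeight η v T)
    (hT : 1 ≤ T) (a W R : ℕ → ℝ) (c : ℝ)
    (hstep : ∀ t, t + 1 ≤ T →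
      η (t + 1) * (v (t + 1) * a (t + 2)
        - (v 0 * c + ∑ r ∈ Icc 1 (t + 1), (v r - v (r - 1)) * a r))
        ≤ W t - W (t + 1) + R (t + 1)) :
    η T * (v T * a (T + 1) - c) ≤ W 0 - W T + ∑ t ∈ Icc 1 T, R t := by
  set S : ℕ → ℝ := fun m => ∑ s ∈ Icc m T, η s
  set Φ : ℕ → ℝ := fun n => v 0 * c + ∑ r ∈ Icc 1 n, (v r - v (r - 1)) * a r
  have hS : ∀ m, 1 ≤ m → m ≤ T → S m = η m + S (m + 1) := fun m _ hmT => by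
    simp only [S, ← add_sum_Ioc_eq_sum_Icc hmT, Icc_add_one_left_eq_Ioc]
  have hΦ : ∀ n, Φ (n + 1) = Φ n + (v (n + 1) - v n) * a (n + 1) := fun n => by
    simp only [Φ, sum_Icc_succ_top (Nat.le_add_left 1 n), Nat.add_sub_cancel]; ring
  -- Abel summation: `S (n + 1) * Φ n` carries the part of `∑ η_t Φ_t` not yet paid for.
  suffices key : ∀ n, 1 ≤ n → n ≤ T →
      η n * v n * a (n + 1) + S (n + 1) * Φ n + W n ≤ η T * c + W 0 + ∑ t ∈ Icc 1 n, R t by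
    have hST : S (T + 1) = 0 := by simp [S]
    have := key T hT le_rfl
    rw [hST] at this
    linarith
  intro n hn
  induction n, hn using Nat.le_induction with
  | base =>
    intro hT1
    have h0 := hstep 0 hT1
    have hv01 := hv.apply_zero hT
    have hc : v 0 * S 1 = η T := by rw [hv01]; exact hv.mul_sum_Icc hη le_rfl hT
    simp only [Φ, zero_add, Icc_self, sum_singleton, Nat.sub_self] at h0 ⊢
    rw [hS 1 le_rfl hT1] at hc
    rw [← hv01, sub_self, zero_mul, add_zero] at h0 ⊢
    linear_combination h0 + c * hc
  | succ n hn ih =>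
    intro hnT
    have h : η (n + 1) * (v (n + 1) * a (n + 2) - Φ (n + 1)) ≤ W n - W (n + 1) + R (n + 1) :=
      hstep n hnT
    have hkey : (v (n + 1) - v n) * S (n + 1) = v n * η n := hv.succ_sub_mul_sum_Icc hη hn hnT
    have hprev := ih (by omega)
    rw [hS (n + 1) (by omega) hnT] at hprev hkey
    rw [hΦ n] at h ⊢
    rw [sum_Icc_succ_top (by omega : 1 ≤ n + 1)]
    linear_combination hprev + h + a (n + 1) * hkey

variable {E : Type*} [AddCommGroup E] [Module ℝ E] {x z : ℕ → E} {y : E}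

namespace IsAnytimeAverage

theorem zero (hz : IsAnytimeAverage v y x z T) (hv : ∀ t ≤ T, 0 < v t) : z 0 = y := by
  simp [hz 0 (Nat.zero_le T), (hv 0 (Nat.zero_le T)).ne']

theorem smul_succ (hz : IsAnytimeAverage v y x z T) (hv : ∀ t ≤ T, v t ≠ 0) {t : ℕ}
    (ht : t + 1 ≤ T) :
    v (t + 1) • z (t + 1) = v t • z t + (v (t + 1) - v t) • x (t + 1) := by
  have hsmul : ∀ n ≤ T, v n • z n = v 0 • y + ∑ s ∈ Icc 1 n, (v s - v (s - 1)) • x s := by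
    intro n hn
    simp only [hz n hn, smul_add, smul_sum, smul_smul, mul_div_cancel₀ _ (hv n hn)]
  rw [hsmul _ ht, hsmul _ (by omega), sum_Icc_succ_top (by omega), Nat.add_sub_cancel, add_assoc]

theorem mem {X : Set E} (hz : IsAnytimeAverage v y x z T) (hX : Convex ℝ X)
    (hv : ∀ t ≤ T, 0 < v t) (hmono : ∀ t, t + 1 ≤ T → v t ≤ v (t + 1))
    (hx : ∀ t, 1 ≤ t → t ≤ T → x t ∈ X) (hy : y ∈ X) : ∀ t ≤ T, z t ∈ X := by
  intro t
  induction t with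
  | zero => intro _; rwa [hz.zero hv]
  | succ t ih =>
    intro ht
    exact hX.mem_of_smul_eq (ih (by omega)) (hx (t + 1) (by omega) ht) (hv t (by omega)).le
      (sub_nonneg.2 (hmono t ht)) (hv _ ht) (add_sub_cancel _ _)
      (hz.smul_succ (fun t ht => (hv t ht).ne') ht)

theorem mul_apply_le {X : Set E} {F : E → ℝ} (hz : IsAnytimeAverage v y x z T)
    (hF : ConvexOn ℝ X F) (hv : ∀ t ≤ T, 0 < v t) (hmono : ∀ t, t + 1 ≤ T → v t ≤ v (t + 1))
    (hx : ∀ t, 1 ≤ t → t ≤ T → x t ∈ X) (hy : y ∈ X) :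
    ∀ t ≤ T, v t * F (z t) ≤ v 0 * F y + ∑ r ∈ Icc 1 t, (v r - v (r - 1)) * F (x r) := by
  intro t
  induction t with
  | zero => intro _; simp [hz.zero hv]
  | succ t ih =>
    intro ht
    have hconv := hF.mul_le_of_smul_eq (hz.mem hF.1 hv hmono hx hy t (by omega))
      (hx (t + 1) (by omega) ht) (hv t (by omega)).le (sub_nonneg.2 (hmono t ht)) (hv _ ht)
      (add_sub_cancel _ _) (hz.smul_succ (fun t ht => (hv t ht).ne') ht)
    rw [sum_Icc_succ_top (by omega), Nat.add_sub_cancel]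
    linarith [ih (by omega)]

end IsAnytimeAverage

theorem anytime_average_le {X : Set E} {F : E → ℝ} {D : E → E → ℝ} (hF : ConvexOn ℝ X F)
    (hD : ∀ w, ConvexOn ℝ X (fun u => D u w)) (hD0 : ∀ u ∈ X, ∀ w ∈ X, 0 ≤ D u w)
    (hDself : ∀ u, D u u = 0) (hη : ∀ t ∈ Icc 1 T, 0 < η t) (hv : IsAnytimeWeight η v T)
    (hT : 1 ≤ T) (hx : ∀ t, 1 ≤ t → t ≤ T + 1 → x t ∈ X) (hy : y ∈ X)
    (hz : IsAnytimeAverage v y x z T) (ε : ℕ → E → ℝ) (hε : ∀ t, ε t (x t) = 0) (C : ℕ → ℝ)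
    (hstep : ∀ t ∈ Icc 1 T, ∀ u ∈ X,
      η t * (F (x (t + 1)) - F u) ≤ ε t u + D u (x t) - D u (x (t + 1)) + C t) :
    η T * v T * (F (x (T + 1)) - F y) ≤
      v 0 * D y (x 1) + ∑ t ∈ Icc 1 T, v (t - 1) * ε t (z (t - 1))
        + ∑ t ∈ Icc 1 T, v t * C t := by
  have hvpos : ∀ t ≤ T, 0 < v t := fun t => hv.pos hη hT
  have hmono : ∀ t, t + 1 ≤ T → v t ≤ v (t + 1) := fun t => hv.le_succ hη
  have hxT : ∀ t, 1 ≤ t → t ≤ T → x t ∈ X := fun t h1 h2 => hx t h1 (by omega)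
  have hzX := hz.mem hF.1 hvpos hmono hxT hy
  have hFz := hz.mul_apply_le hF hvpos hmono hxT hy
  -- compare with `u = z t` (weight `v t`) and with `u = x (t + 1)` (weight `v (t + 1) - v t`)
  have key := weighted_last_iterate_le hη hv hT (fun r => F (x r))
    (fun t => v t * D (z t) (x (t + 1))) (fun t => v (t - 1) * ε t (z (t - 1)) + v t * C t)
    (F y) fun t ht => by
      have hmem : t + 1 ∈ Icc 1 T := mem_Icc.2 ⟨by omega, ht⟩
      have hvt := hvpos t (by omega)
      have hΔ := sub_nonneg.2 (hmono t ht)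
      have hcur := mul_le_mul_of_nonneg_left (hstep _ hmem _ (hzX t (by omega))) hvt.le
      have hnew := mul_le_mul_of_nonneg_left
        (hstep _ hmem _ (hx (t + 1) (by omega) (by omega))) hΔ
      have hFavg := mul_le_mul_of_nonneg_left (hFz t (by omega)) (hη _ hmem).le
      have hDavg := (hD (x (t + 2))).mul_le_of_smul_eq (hzX t (by omega))
        (hx (t + 1) (by omega) (by omega)) hvt.le hΔ (hvpos _ ht) (add_sub_cancel _ _)
        (hz.smul_succ (fun t ht => (hvpos t ht).ne') ht)
      rw [hε, hDself] at hnew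
      simp only [sum_Icc_succ_top (by omega : 1 ≤ t + 1), Nat.add_sub_cancel]
      linear_combination hcur + hnew + hFavg + hDavg
  have hW : 0 ≤ v T * D (z T) (x (T + 1)) :=
    mul_nonneg (hvpos T le_rfl).le (hD0 _ (hzX T le_rfl) _ (hx _ (by omega) le_rfl))
  simp only [hv.apply_last hη hT, hz.zero hvpos, sum_add_distrib, zero_add, one_mul, mul_one]
    at key hW ⊢
  linarith

end Averaging

theorem csmd_unified_deterministic_heavy_general
    (p : ℝ) (hp1 : 1 < p) (hp2 : p < 2)
    {d : ℕ}
    (X : Set (EuclideanSpace ℝ (Fin d))) (hXcv : Convex ℝ X)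
    (nrm : EuclideanSpace ℝ (Fin d) → ℝ)
    (hnrm_zero : ∀ x, nrm x = 0 ↔ x = 0)
    (hnrm_smul : ∀ (c : ℝ) (x : EuclideanSpace ℝ (Fin d)), nrm (c • x) = |c| * nrm x)
    (hnrm_tri : ∀ x y, nrm (x + y) ≤ nrm x + nrm y)
    (f h : EuclideanSpace ℝ (Fin d) → ℝ)
    (hf_cv : ConvexOn ℝ Set.univ f) (hh_cv : ConvexOn ℝ Set.univ h)
    (ψ : EuclideanSpace ℝ (Fin d) → ℝ) (gψ : EuclideanSpace ℝ (Fin d) → EuclideanSpace ℝ (Fin d))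
    (hψ_diff : ∀ y, HasGradientAt ψ (gψ y) y)
    (hψ_uc : ∀ x ∈ X, ∀ y ∈ X, (p - 1) / p * nrm (x - y) ^ (p / (p - 1)) ≤ breg ψ gψ x y)
    (L M : ℝ) (hL : 0 ≤ L) (hM : 0 ≤ M)
    (hsmooth : ∀ x ∈ X, ∀ y ∈ X, ∀ g ∈ subgrad X f y,
      f x - f y - ⟪g, x - y⟫ ≤ L / 2 * nrm (x - y) ^ 2 + M * nrm (x - y))
    (T : ℕ) (hT : 2 ≤ T)
    (η : ℕ → ℝ) (hη_pos : ∀ t ∈ Finset.Icc 1 T, 0 < η t)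
    (ghat gsub : ℕ → EuclideanSpace ℝ (Fin d))
    (x : ℕ → EuclideanSpace ℝ (Fin d)) (hx1 : x 1 ∈ X)
    (hgsub : ∀ t ∈ Finset.Icc 1 T, gsub t ∈ subgrad X f (x t))
    (hupdate : ∀ t ∈ Finset.Icc 1 T, x (t + 1) ∈ X ∧
      IsMinOn (fun u => h u + ⟪ghat t, u - x t⟫ + breg ψ gψ u (x t) / η t) X (x (t + 1)))
    (v : ℕ → ℝ)
    (hv : ∀ t ≤ T, v t = η T / ∑ s ∈ Finset.Icc (max t 1) T, η s)
    (xpt : EuclideanSpace ℝ (Fin d)) (hxpt : xpt ∈ X)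
    (z : ℕ → EuclideanSpace ℝ (Fin d))
    (hz : ∀ t ≤ T, z t =
      (v 0 / v t) • xpt + ∑ s ∈ Finset.Icc 1 t, ((v s - v (s - 1)) / v t) • x s) :
    η T * v T * ((f (x (T + 1)) + h (x (T + 1))) - (f xpt + h xpt)) ≤
      v 0 * breg ψ gψ xpt (x 1)
      + ∑ t ∈ Finset.Icc 1 T, η t * v (t - 1) * ⟪ghat t - gsub t, z (t - 1) - x t⟫
      + ∑ t ∈ Finset.Icc 1 T,
          (η t ^ (p / (2 - p)) * v t * (2 - p) * (2 : ℝ) ^ ((3 * p - 4) / (2 - p)) *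
              L ^ (p / (2 - p))
            + η t ^ p * v t * (4 : ℝ) ^ (p - 1) *
                (M ^ p + dualNorm nrm (ghat t - gsub t) ^ p)) / p := by
  set ν : Seminorm ℝ (EuclideanSpace ℝ (Fin d)) :=
    Seminorm.of nrm hnrm_tri fun c x => by rw [hnrm_smul, Real.norm_eq_abs]
  have hν : ∀ x, ν x = 0 → x = 0 := fun x => (hnrm_zero x).1
  have hx : ∀ t, 1 ≤ t → t ≤ T + 1 → x t ∈ X := fun t h1 h2 => by
    obtain ⟨s, rfl⟩ := Nat.exists_eq_add_of_le' h1
    rcases s.eq_zero_or_pos with rfl | hs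
    · exact hx1
    · exact (hupdate s (Finset.mem_Icc.2 ⟨hs, by omega⟩)).1
  have hbreg0 : ∀ a ∈ X, ∀ b ∈ X, 0 ≤ breg ψ gψ a b := fun a ha b hb =>
    le_trans (mul_nonneg (div_nonneg (by linarith) (by linarith))
      (Real.rpow_nonneg (apply_nonneg ν _) _)) (hψ_uc a ha b hb)
  have hh : ConvexOn ℝ X h := hh_cv.subset (Set.subset_univ X) hXcv
  have key := anytime_average_le ((hf_cv.subset (Set.subset_univ X) hXcv).add hh)
    (convexOn_breg_left hXcv hbreg0) hbreg0 breg_self hη_pos hv (by omega) hx hxpt hz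
    (fun t u => η t * ⟪ghat t - gsub t, u - x t⟫) (by simp)
    (fun t => (η t ^ (p / (2 - p)) * (2 - p) * 2 ^ ((3 * p - 4) / (2 - p)) * L ^ (p / (2 - p))
      + η t ^ p * 4 ^ (p - 1) * (M ^ p + dualNorm nrm (ghat t - gsub t) ^ p)) / p)
    fun t ht u hu => by
      obtain ⟨hxt1, hmin⟩ := hupdate t ht
      have hxt := hx t (Finset.mem_Icc.1 ht).1 (by linarith [(Finset.mem_Icc.1 ht).2])
      have hξ := inner_le_dualNorm_mul ν hν (ghat t - gsub t) (x t - x (t + 1))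
      rw [← map_neg_eq_map, neg_sub] at hξ
      exact csmd_one_step_le hp1 hp2 hL hM (dualNorm_nonneg ν hν _) (hη_pos t ht)
        (apply_nonneg ν _) hh (hψ_diff _) hmin hxt1 hu (hgsub t ht)
        (hsmooth _ hxt1 _ hxt _ (hgsub t ht)) (hψ_uc _ hxt1 _ hxt) hξ
  refine key.trans_eq ?_
  congr 1
  · congr 1
    exact Finset.sum_congr rfl fun t _ => by ring
  · exact Finset.sum_congr rfl fun t _ => by ring

/-- Lemma 6 (unified deterministic inequality for CSMD under a `(1, p/(p−1))`-uniformly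
convex mirror map, heavy-tail setting). -/
theorem csmd_unified_deterministic_heavy
    (p : ℝ) (hp1 : 1 < p) (hp2 : p < 2)
    {d : ℕ}
    (X : Set (EuclideanSpace ℝ (Fin d))) (hXne : X.Nonempty) (hXcl : IsClosed X) (hXcv : Convex ℝ X)
    (nrm : EuclideanSpace ℝ (Fin d) → ℝ)
    (hnrm_nonneg : ∀ x, 0 ≤ nrm x)
    (hnrm_zero : ∀ x, nrm x = 0 ↔ x = 0)
    (hnrm_smul : ∀ (c : ℝ) (x : EuclideanSpace ℝ (Fin d)), nrm (c • x) = |c| * nrm x)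
    (hnrm_tri : ∀ x y, nrm (x + y) ≤ nrm x + nrm y)
    (f h : EuclideanSpace ℝ (Fin d) → ℝ)
    (hf_cv : ConvexOn ℝ Set.univ f) (hh_cv : ConvexOn ℝ Set.univ h)
    (ψ : EuclideanSpace ℝ (Fin d) → ℝ) (gψ : EuclideanSpace ℝ (Fin d) → EuclideanSpace ℝ (Fin d))
    (hψ_diff : ∀ y, HasGradientAt ψ (gψ y) y)
    (hψ_uc : ∀ x ∈ X, ∀ y ∈ X, (p - 1) / p * nrm (x - y) ^ (p / (p - 1)) ≤ breg ψ gψ x y)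
    (L M : ℝ) (hL : 0 ≤ L) (hM : 0 ≤ M)
    (hsmooth : ∀ x ∈ X, ∀ y ∈ X, ∀ g ∈ subgrad X f y,
      f x - f y - ⟪g, x - y⟫ ≤ L / 2 * nrm (x - y) ^ 2 + M * nrm (x - y))
    (T : ℕ) (hT : 2 ≤ T)
    (η : ℕ → ℝ) (hη_pos : ∀ t ∈ Finset.Icc 1 T, 0 < η t)
    (ghat gsub : ℕ → EuclideanSpace ℝ (Fin d))
    (x : ℕ → EuclideanSpace ℝ (Fin d)) (hx1 : x 1 ∈ X)
    (hgsub : ∀ t ∈ Finset.Icc 1 T, gsub t ∈ subgrad X f (x t))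
    (hupdate : ∀ t ∈ Finset.Icc 1 T, x (t + 1) ∈ X ∧
      IsMinOn (fun u => h u + ⟪ghat t, u - x t⟫ + breg ψ gψ u (x t) / η t) X (x (t + 1)))
    (v : ℕ → ℝ)
    (hv : ∀ t ≤ T, v t = η T / ∑ s ∈ Finset.Icc (max t 1) T, η s)
    (xpt : EuclideanSpace ℝ (Fin d)) (hxpt : xpt ∈ X)
    (z : ℕ → EuclideanSpace ℝ (Fin d))
    (hz : ∀ t ≤ T, z t =
      (v 0 / v t) • xpt + ∑ s ∈ Finset.Icc 1 t, ((v s - v (s - 1)) / v t) • x s) :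
    η T * v T * ((f (x (T + 1)) + h (x (T + 1))) - (f xpt + h xpt)) ≤
      v 0 * breg ψ gψ xpt (x 1)
      + ∑ t ∈ Finset.Icc 1 T, η t * v (t - 1) * ⟪ghat t - gsub t, z (t - 1) - x t⟫
      + ∑ t ∈ Finset.Icc 1 T,
          (η t ^ (p / (2 - p)) * v t * (2 - p) * (2 : ℝ) ^ ((3 * p - 4) / (2 - p)) *
              L ^ (p / (2 - p))
            + η t ^ p * v t * (4 : ℝ) ^ (p - 1) *
                (M ^ p + dualNorm nrm (ghat t - gsub t) ^ p)) / p :=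
  csmd_unified_deterministic_heavy_general p hp1 hp2 X hXcv nrm hnrm_zero hnrm_smul hnrm_tri f h
    hf_cv hh_cv ψ gψ hψ_diff hψ_uc L M hL hM hsmooth T hT η hη_pos ghat gsub x hx1 hgsub hupdate v
    hv xpt hxpt z hz
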